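/- arXiv:1801.08876 — 2 statements merged into one kernel-verified Lean document; each statement's English description precedes it below -/
import Mathlib

section
/- For every natural number n there exists a finite graph G whose edge set can be partitioned into two parts each of which is locally regular, while every partition of E(G) into regular parts requires at least n parts; that is, the difference between the regular number and the regular chromatic index of a graph can be arbitrarily large. -/
open SimpleGraph

variable {V : Type*}

/-- The degree of a vertex `v` in an edge part `E`: the number of edges of `E` incident to `v`. -/
noncomputable def partDeg (E : Set (Sym2 V)) (v : V) : ℕ :=
  {e ∈ E | v ∈ e}.ncard

/-- A part is a matching if no two of its edges share a vertex. -/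
def IsMatchingPart (E : Set (Sym2 V)) : Prop :=
  ∀ e ∈ E, ∀ f ∈ E, e ≠ f → ∀ v : V, v ∈ e → v ∉ f

/-- A part is locally irregular if the endpoints of each of its edges have distinct degrees. -/
def IsLocallyIrregularPart (E : Set (Sym2 V)) : Prop :=
  ∀ u v : V, s(u, v) ∈ E → partDeg E u ≠ partDeg E v

/-- A part is locally regular if the endpoints of each of its edges have equal degrees. -/
def IsLocallyRegularPart (E : Set (Sym2 V)) : Prop :=
  ∀ u v : V, s(u, v) ∈ E → partDeg E u = partDeg E v

/-- A part is regular if all vertices incident to one of its edges have the same degree `r ≥ 1`. -/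
def IsRegularPart (E : Set (Sym2 V)) : Prop :=
  ∃ r : ℕ, 1 ≤ r ∧ ∀ v : V, (∃ e ∈ E, v ∈ e) → partDeg E v = r

/-- A part is `r`-regular if every vertex incident to one of its edges has degree `r` in it. -/
def IsRegularPartOfDeg (r : ℕ) (E : Set (Sym2 V)) : Prop :=
  ∀ v : V, (∃ e ∈ E, v ∈ e) → partDeg E v = r

/-- A part is locally `k`-irregular if endpoint degrees of each edge differ by at least `k`. -/
def IsLocallyKIrregularPart (k : ℕ) (E : Set (Sym2 V)) : Prop :=
  ∀ u v : V, s(u, v) ∈ E → (k : ℤ) ≤ |(partDeg E u : ℤ) - (partDeg E v : ℤ)|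

/-- The maximum degree of a finite graph. -/
noncomputable def maxDeg [Fintype V] (G : SimpleGraph V) : ℕ :=
  Finset.univ.sup fun v => partDeg G.edgeSet v

/-!
Take `n` disjoint bowties: component `k` is two copies of `K_{N+1}`, `N = n ^ (k + 1)`, sharing
one vertex `c_k`. Each clique is regular, so the union of the left cliques and that of the right
cliques are the two locally regular parts. In a partition into regular parts, every part at `c_k` has degree at most
`N` (its edges at `c_k` end at vertices of degree `N`), and these degrees add up to
`deg c_k = 2N`. With fewer than `n` parts, one of them therefore has degree in
`(n ^ k, n ^ (k + 1)]`; a regular part has a single degree, so the components need pairwise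
distinct parts, i.e. at least `n` of them.
-/

open Function

variable {W ι : Type*}

lemma partDeg_eq_ncard_setOf (E : Set (Sym2 V)) (v : V) :
    partDeg E v = {u | s(v, u) ∈ E}.ncard := by
  have himg : {e ∈ E | v ∈ e} = (fun u => s(v, u)) '' {u | s(v, u) ∈ E} := by
    ext e
    refine ⟨fun ⟨he, hv⟩ => ?_, ?_⟩
    · obtain ⟨u, rfl⟩ := Sym2.mem_iff_exists.mp hv
      exact ⟨u, he, rfl⟩
    · rintro ⟨u, hu, rfl⟩
      exact ⟨hu, Sym2.mem_mk_left v u⟩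
  rw [partDeg, himg, Set.ncard_image_of_injective _ fun _ _ => Sym2.congr_right.mp]

lemma partDeg_edgeSet (G : SimpleGraph V) (v : V) :
    partDeg G.edgeSet v = {u | G.Adj v u}.ncard :=
  partDeg_eq_ncard_setOf _ v

lemma partDeg_mono [Finite V] {E F : Set (Sym2 V)} (h : E ⊆ F) (v : V) :
    partDeg E v ≤ partDeg F v :=
  Set.ncard_le_ncard (fun _ he => ⟨h he.1, he.2⟩) (Set.toFinite _)

lemma partDeg_eq_zero {E : Set (Sym2 V)} {v : V} (h : ¬∃ e ∈ E, v ∈ e) : partDeg E v = 0 := by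
  have hempty : {e ∈ E | v ∈ e} = ∅ := Set.eq_empty_of_forall_notMem fun e he => h ⟨e, he⟩
  rw [partDeg, hempty, Set.ncard_empty]

lemma partDeg_union [Finite V] {E F : Set (Sym2 V)} (h : Disjoint E F) (v : V) :
    partDeg (E ∪ F) v = partDeg E v + partDeg F v := by
  have hsep : {e ∈ E ∪ F | v ∈ e} = {e ∈ E | v ∈ e} ∪ {e ∈ F | v ∈ e} := Set.sep_union
  rw [partDeg, hsep, Set.ncard_union_eq (h.mono (Set.sep_subset _ _) (Set.sep_subset _ _))
    (Set.toFinite _) (Set.toFinite _)]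
  rfl

lemma partDeg_iUnion [Finite V] [Fintype ι] {P : ι → Set (Sym2 V)}
    (hd : Pairwise (Disjoint on P)) (v : V) :
    partDeg (⋃ i, P i) v = ∑ i, partDeg (P i) v := by
  have hsep : {e ∈ ⋃ i, P i | v ∈ e} = ⋃ i, {e ∈ P i | v ∈ e} := by
    ext e
    simp only [Set.mem_ofPred_eq, Set.mem_iUnion, exists_and_right]
  rw [partDeg, hsep, Set.ncard_iUnion_of_finite (fun _ => Set.toFinite _)
      (fun i j hij => (hd hij).mono (Set.sep_subset _ _) (Set.sep_subset _ _)),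
    finsum_eq_sum_of_fintype]
  rfl

/- In the paper's notation: `χ'_reg G ≤ 2` and `n ≤ reg G`. -/
def HasLocallyRegularTwoPartition (G : SimpleGraph V) : Prop :=
  ∃ E₁ E₂ : Set (Sym2 V), E₁ ∪ E₂ = G.edgeSet ∧ Disjoint E₁ E₂ ∧
    IsLocallyRegularPart E₁ ∧ IsLocallyRegularPart E₂

def RegularNumberAtLeast (n : ℕ) (G : SimpleGraph V) : Prop :=
  ∀ (t : ℕ) (P : Fin t → Set (Sym2 V)), (⋃ i, P i) = G.edgeSet →
    (∀ i j, i ≠ j → Disjoint (P i) (P j)) → (∀ i, IsRegularPart (P i)) → n ≤ t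

lemma edgeSet_comap (f : W → V) (G : SimpleGraph V) :
    (G.comap f).edgeSet = Sym2.map f ⁻¹' G.edgeSet := by
  ext e
  induction e using Sym2.ind
  rfl

lemma partDeg_preimage_sym2Map (e : W ≃ V) (E : Set (Sym2 V)) (w : W) :
    partDeg (Sym2.map e ⁻¹' E) w = partDeg E (e w) := by
  rw [partDeg_eq_ncard_setOf, partDeg_eq_ncard_setOf,
    ← Set.ncard_preimage_of_injective_subset_range e.injective (by simp)]
  rfl

lemma IsLocallyRegularPart.preimage_sym2Map (e : W ≃ V) {E : Set (Sym2 V)}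
    (h : IsLocallyRegularPart E) : IsLocallyRegularPart (Sym2.map e ⁻¹' E) := fun u v huv => by
  rw [partDeg_preimage_sym2Map, partDeg_preimage_sym2Map]
  exact h _ _ huv

lemma IsRegularPartOfDeg.preimage_sym2Map (e : W ≃ V) {r : ℕ} {E : Set (Sym2 V)}
    (h : IsRegularPartOfDeg r E) : IsRegularPartOfDeg r (Sym2.map e ⁻¹' E) := by
  rintro w ⟨x, hx, hw⟩
  rw [partDeg_preimage_sym2Map]
  exact h _ ⟨_, hx, Sym2.mem_map.mpr ⟨w, hw, rfl⟩⟩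

lemma HasLocallyRegularTwoPartition.comap (e : W ≃ V) {G : SimpleGraph V}
    (h : HasLocallyRegularTwoPartition G) : HasLocallyRegularTwoPartition (G.comap e) := by
  obtain ⟨E₁, E₂, hU, hd, h₁, h₂⟩ := h
  exact ⟨_, _, by rw [← Set.preimage_union, hU, edgeSet_comap], hd.preimage _,
    h₁.preimage_sym2Map e, h₂.preimage_sym2Map e⟩

lemma RegularNumberAtLeast.comap (e : W ≃ V) {n : ℕ} {G : SimpleGraph V}
    (h : RegularNumberAtLeast n G) : RegularNumberAtLeast n (G.comap e) := by
  intro t P hU hd hreg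
  refine h t (fun i => Sym2.map e.symm ⁻¹' P i) ?_ (fun i j hij => (hd i j hij).preimage _)
    fun i => ?_
  · rw [← Set.preimage_iUnion, hU, edgeSet_comap, ← Set.preimage_comp, ← Sym2.map_comp,
      e.self_comp_symm, Sym2.map_id, Set.preimage_id]
  · obtain ⟨r, hr, hP⟩ := hreg i
    exact ⟨r, hr, IsRegularPartOfDeg.preimage_sym2Map e.symm hP⟩

lemma exists_regularDeg_mem_Ioc [Finite V] [Fintype ι] {G : SimpleGraph V}
    {P : ι → Set (Sym2 V)} (hU : ⋃ i, P i = G.edgeSet) (hd : Pairwise (Disjoint on P))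
    {r : ι → ℕ} (hr : ∀ i, IsRegularPartOfDeg (r i) (P i)) {c : V} {L D : ℕ}
    (hD : ∀ u, G.Adj c u → partDeg G.edgeSet u ≤ D)
    (hc : Fintype.card ι * L < partDeg G.edgeSet c) :
    ∃ i, r i ∈ Set.Ioc L D := by
  by_contra! hlow
  have hle : ∀ i, partDeg (P i) c ≤ L := by
    intro i
    by_cases hci : ∃ e ∈ P i, c ∈ e
    · obtain ⟨e, he, hce⟩ := hci
      obtain ⟨u, rfl⟩ := Sym2.mem_iff_exists.mp hce
      have hsub : P i ⊆ G.edgeSet := hU ▸ Set.subset_iUnion P i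
      have hrD : r i ≤ D := calc
        r i = partDeg (P i) u := (hr i u ⟨_, he, Sym2.mem_mk_right c u⟩).symm
        _ ≤ partDeg G.edgeSet u := partDeg_mono hsub u
        _ ≤ D := hD u (hsub he)
      rw [hr i c ⟨_, he, hce⟩]
      by_contra! hL
      exact hlow i ⟨hL, hrD⟩
    · rw [partDeg_eq_zero hci]
      exact Nat.zero_le L
  have hsum : partDeg G.edgeSet c ≤ Fintype.card ι * L := calc
    partDeg G.edgeSet c = ∑ i, partDeg (P i) c := by rw [← hU, partDeg_iUnion hd]
    _ ≤ ∑ _i : ι, L := Finset.sum_le_sum fun i _ => hle i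
    _ = Fintype.card ι * L := by simp
  omega

section CliqueUnion

variable {α : ι → Type*}

def cliqueUnion (s : (k : ι) → α k → Prop) : SimpleGraph (Σ k, α k) where
  Adj u v := u ≠ v ∧ u.1 = v.1 ∧ s u.1 u.2 ∧ s v.1 v.2
  symm := ⟨fun _ _ h => ⟨h.1.symm, h.2.1.symm, h.2.2.2, h.2.2.1⟩⟩
  loopless := ⟨fun _ h => h.1 rfl⟩

variable {s : (k : ι) → α k → Prop}

lemma cliqueUnion_adj {u v : Σ k, α k} :
    (cliqueUnion s).Adj u v ↔ u ≠ v ∧ u.1 = v.1 ∧ s u.1 u.2 ∧ s v.1 v.2 :=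
  Iff.rfl

lemma partDeg_cliqueUnion [∀ k, Finite (α k)] [∀ k, DecidablePred (s k)] (k : ι) (j : α k) :
    partDeg (cliqueUnion s).edgeSet ⟨k, j⟩ = if s k j then {i | s k i}.ncard - 1 else 0 := by
  rw [partDeg_edgeSet]
  split_ifs with hj
  · have hnbrs : {u | (cliqueUnion s).Adj ⟨k, j⟩ u} = Sigma.mk k '' ({i | s k i} \ {j}) := by
      ext ⟨l, i⟩
      constructor
      · rintro ⟨hne, rfl : k = l, -, hi⟩
        exact ⟨i, ⟨hi, fun hij => hne (by rw [Set.mem_singleton_iff.mp hij])⟩, rfl⟩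
      · rintro ⟨i, ⟨hi, hij⟩, he⟩
        cases he
        exact ⟨fun he => hij (sigma_mk_injective he).symm, rfl, hj, hi⟩
    rw [hnbrs, Set.ncard_image_of_injective _ sigma_mk_injective,
      Set.ncard_sdiff_singleton_of_mem (show j ∈ {i | s k i} from hj)]
  · have hnbrs : {u | (cliqueUnion s).Adj ⟨k, j⟩ u} = ∅ :=
      Set.eq_empty_of_forall_notMem fun _ h => hj (cliqueUnion_adj.mp h).2.2.1
    rw [hnbrs, Set.ncard_empty]

lemma isLocallyRegularPart_cliqueUnion [∀ k, Finite (α k)] :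
    IsLocallyRegularPart (cliqueUnion s).edgeSet := by
  classical
  rintro ⟨k, i⟩ ⟨l, j⟩ h
  obtain ⟨-, rfl : k = l, hi, hj⟩ := cliqueUnion_adj.mp h
  rw [partDeg_cliqueUnion, partDeg_cliqueUnion, if_pos hi, if_pos hj]

end CliqueUnion

section Bowties

variable (N : ι → ℕ)

abbrev BowtieVertex := Σ k : ι, Fin (2 * N k + 1)

/- Component `k` is a clique on `{j ≤ N k}` and a clique on `{j ≥ N k}`, glued at the vertex
`j = N k`. -/
def leftCliques : SimpleGraph (BowtieVertex N) :=
  cliqueUnion fun k (j : Fin (2 * N k + 1)) => j.val ≤ N k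

def rightCliques : SimpleGraph (BowtieVertex N) :=
  cliqueUnion fun k (j : Fin (2 * N k + 1)) => N k ≤ j.val

def bowties : SimpleGraph (BowtieVertex N) := leftCliques N ⊔ rightCliques N

def bowtieCenter (k : ι) : BowtieVertex N := ⟨k, ⟨N k, by omega⟩⟩

lemma ncard_setOf_val_le (M : ℕ) : {j : Fin (2 * M + 1) | j.val ≤ M}.ncard = M + 1 := by
  have hIic : {j : Fin (2 * M + 1) | j.val ≤ M} =
      ↑(Finset.Iic (⟨M, by omega⟩ : Fin (2 * M + 1))) := by
    ext j
    simp [Fin.le_def]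
  rw [hIic, Set.ncard_coe_finset, Fin.card_Iic]

lemma ncard_setOf_le_val (M : ℕ) : {j : Fin (2 * M + 1) | M ≤ j.val}.ncard = M + 1 := by
  have hIci : {j : Fin (2 * M + 1) | M ≤ j.val} =
      ↑(Finset.Ici (⟨M, by omega⟩ : Fin (2 * M + 1))) := by
    ext j
    simp [Fin.le_def]
  rw [hIci, Set.ncard_coe_finset, Fin.card_Ici, Fin.val_mk]
  omega

lemma disjoint_edgeSet_leftCliques_rightCliques :
    Disjoint (leftCliques N).edgeSet (rightCliques N).edgeSet := by
  rw [Set.disjoint_left]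
  intro e hl hr
  induction e using Sym2.ind with
  | h u v =>
    obtain ⟨hne, hfst, hu, hv⟩ := cliqueUnion_adj.mp ((mem_edgeSet _).mp hl)
    obtain ⟨-, -, hu', hv'⟩ := cliqueUnion_adj.mp ((mem_edgeSet _).mp hr)
    obtain ⟨k, i⟩ := u
    obtain ⟨l, j⟩ := v
    obtain rfl : k = l := hfst
    exact hne (congrArg _ (Fin.ext (by dsimp only at *; omega)))

lemma bowties_adj_fst {u v : BowtieVertex N} (h : (bowties N).Adj u v) : u.1 = v.1 :=
  h.elim (fun h => (cliqueUnion_adj.mp h).2.1) fun h => (cliqueUnion_adj.mp h).2.1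

lemma hasLocallyRegularTwoPartition_bowties :
    HasLocallyRegularTwoPartition (bowties N) :=
  ⟨_, _, (edgeSet_sup _ _).symm, disjoint_edgeSet_leftCliques_rightCliques N,
    isLocallyRegularPart_cliqueUnion, isLocallyRegularPart_cliqueUnion⟩

variable [Finite ι]

lemma partDeg_bowties (k : ι) (j : Fin (2 * N k + 1)) :
    partDeg (bowties N).edgeSet ⟨k, j⟩ =
      (if j.val ≤ N k then N k else 0) + (if N k ≤ j.val then N k else 0) := by
  rw [bowties, edgeSet_sup, partDeg_union (disjoint_edgeSet_leftCliques_rightCliques N),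
    leftCliques, rightCliques, partDeg_cliqueUnion, partDeg_cliqueUnion, ncard_setOf_val_le,
    ncard_setOf_le_val]
  simp only [Nat.add_sub_cancel]

lemma partDeg_bowtieCenter (k : ι) :
    partDeg (bowties N).edgeSet (bowtieCenter N k) = 2 * N k := by
  rw [bowtieCenter, partDeg_bowties, if_pos le_rfl, two_mul]

lemma partDeg_le_of_adj_bowtieCenter {k : ι} {u : BowtieVertex N}
    (h : (bowties N).Adj (bowtieCenter N k) u) : partDeg (bowties N).edgeSet u ≤ N k := by
  obtain ⟨l, j⟩ := u
  obtain rfl : k = l := bowties_adj_fst N h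
  have hj : j.val ≠ N k := fun hj => h.ne (congrArg _ (Fin.ext hj.symm))
  rw [partDeg_bowties]
  split_ifs <;> omega

end Bowties

lemma eq_of_mem_Ioc_pow {n a b x : ℕ} (hn : 1 ≤ n) (ha : x ∈ Set.Ioc (n ^ a) (n ^ (a + 1)))
    (hb : x ∈ Set.Ioc (n ^ b) (n ^ (b + 1))) : a = b := by
  have hlt : ∀ {p q}, x ∈ Set.Ioc (n ^ p) (n ^ (p + 1)) → x ∈ Set.Ioc (n ^ q) (n ^ (q + 1)) →
      ¬p < q := fun {p q} hp hq hpq => by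
    have : n ^ (p + 1) ≤ n ^ q := Nat.pow_le_pow_right hn hpq
    have := hp.2
    have := hq.1
    omega
  rcases lt_trichotomy a b with h | h | h
  exacts [(hlt ha hb h).elim, h, (hlt hb ha h).elim]

lemma regularNumberAtLeast_bowties_pow (n : ℕ) :
    RegularNumberAtLeast n (bowties fun k : Fin n => n ^ (k.val + 1)) := by
  intro t P hU hd hreg
  by_contra! ht
  choose r _ hr using hreg
  have hn : 0 < n := by omega
  have hscale : ∀ k : Fin n, ∃ i, r i ∈ Set.Ioc (n ^ k.val) (n ^ (k.val + 1)) := fun k =>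
    exists_regularDeg_mem_Ioc hU hd hr (fun _ => partDeg_le_of_adj_bowtieCenter _) <| by
      have hpos : 0 < n ^ (k.val + 1) := pow_pos hn _
      calc Fintype.card (Fin t) * n ^ k.val < n * n ^ k.val :=
            Nat.mul_lt_mul_of_pos_right (by simpa using ht) (pow_pos hn _)
        _ = n ^ (k.val + 1) := (pow_succ' n k.val).symm
        _ < partDeg _ _ := by rw [partDeg_bowtieCenter]; omega
  choose i hi using hscale
  have hinj : Injective i := fun k l hkl =>
    Fin.ext (eq_of_mem_Ioc_pow (by omega) (hi k) (hkl ▸ hi l))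
  exact absurd (Fin.le_of_injective i hinj) (not_le.mpr ht)

/-- the gap between the regular number and the regular chromatic index can be
arbitrarily large: for every n there is a finite graph decomposable into two locally regular
parts, every partition of whose edge set into regular parts uses at least n parts. -/
theorem stmt_7 (n : ℕ) :
    ∃ (m : ℕ) (G : SimpleGraph (Fin m)),
      (∃ E₁ E₂ : Set (Sym2 (Fin m)),
        E₁ ∪ E₂ = G.edgeSet ∧ Disjoint E₁ E₂ ∧
        IsLocallyRegularPart E₁ ∧ IsLocallyRegularPart E₂) ∧
      ∀ (t : ℕ) (P : Fin t → Set (Sym2 (Fin m))),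
        (⋃ i, P i) = G.edgeSet →
        (∀ i j, i ≠ j → Disjoint (P i) (P j)) →
        (∀ i, IsRegularPart (P i)) →
        n ≤ t := by
  let e := (Fintype.equivFin (BowtieVertex fun k : Fin n => n ^ (k.val + 1))).symm
  exact ⟨_, _, (hasLocallyRegularTwoPartition_bowties _).comap e,
    (regularNumberAtLeast_bowties_pow n).comap e⟩
end

section
/- Let G be a finite graph in which every vertex has degree 2, 3 or 5, and let G' be the induced subgraph of G on the set of vertices of degree 2 or 5. Then E(G) can be partitioned into two (possibly empty) parts E₁ and E₂ such that E₁ is a 2-regular part and E₂ is a 3-regular part if and only if G' has a 2-factor, i.e., a set F of edges of G' such that every vertex of G' is incident to exactly two edges of F. -/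
open SimpleGraph

variable {V : Type*}

/-!
At every vertex the degree in `G` splits as `d₁ + d₂` with `d₁ ∈ {0, 2}` and `d₂ ∈ {0, 3}`.
Hence a vertex has degree 2 or 5 exactly when `d₁ = 2`, so the 2-regular part of a decomposition
is a 2-factor of `G'`; conversely, removing a 2-factor of `G'` leaves every degree-2 vertex
isolated and every vertex of degree 3 or 5 with exactly three edges.
-/

variable {E E₁ E₂ F : Set (Sym2 V)} {v : V}

lemma partDeg_union_s9 (h : Disjoint E₁ E₂) (hfin : {e ∈ E₁ ∪ E₂ | v ∈ e}.Finite) :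
    partDeg (E₁ ∪ E₂) v = partDeg E₁ v + partDeg E₂ v := by
  have hsplit : {e ∈ E₁ ∪ E₂ | v ∈ e} = {e ∈ E₁ | v ∈ e} ∪ {e ∈ E₂ | v ∈ e} := Set.sep_union
  rw [hsplit] at hfin
  rw [partDeg, hsplit, Set.ncard_union_eq (h.mono (Set.sep_subset _ _) (Set.sep_subset _ _))
    (hfin.subset Set.subset_union_left) (hfin.subset Set.subset_union_right)]
  rfl

lemma partDeg_eq_add_partDeg_sdiff (hF : F ⊆ E) (hfin : {e ∈ E | v ∈ e}.Finite) :
    partDeg E v = partDeg F v + partDeg (E \ F) v := by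
  have := partDeg_union_s9 (v := v) (Set.disjoint_sdiff_right (s := F) (t := E))
  rw [Set.union_sdiff_cancel hF] at this
  exact this hfin

lemma partDeg_pos_iff (hfin : {e ∈ E | v ∈ e}.Finite) : 0 < partDeg E v ↔ ∃ e ∈ E, v ∈ e :=
  Set.ncard_pos hfin

lemma partDeg_eq_zero_of_forall_notMem (h : ∀ e ∈ E, v ∉ e) : partDeg E v = 0 := by
  rw [partDeg, Set.sep_eq_empty_iff_mem_false.2 h, Set.ncard_empty]

lemma IsRegularPartOfDeg.partDeg_eq_zero_or_eq {r : ℕ} (hE : IsRegularPartOfDeg r E) (v : V) :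
    partDeg E v = 0 ∨ partDeg E v = r := by
  by_cases hv : ∃ e ∈ E, v ∈ e
  · exact Or.inr (hE v hv)
  · push Not at hv
    exact Or.inl (partDeg_eq_zero_of_forall_notMem hv)

lemma partDeg_union_eq_two_or_five_iff (hdisj : Disjoint E₁ E₂) (h₁ : IsRegularPartOfDeg 2 E₁)
    (h₂ : IsRegularPartOfDeg 3 E₂) (hfin : {e ∈ E₁ ∪ E₂ | v ∈ e}.Finite) :
    partDeg (E₁ ∪ E₂) v = 2 ∨ partDeg (E₁ ∪ E₂) v = 5 ↔ partDeg E₁ v = 2 := by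
  rw [partDeg_union_s9 hdisj hfin]
  rcases h₁.partDeg_eq_zero_or_eq v with h | h <;>
    rcases h₂.partDeg_eq_zero_or_eq v with h' | h' <;> omega

lemma isRegularPartOfDeg_three_sdiff
    (hdeg : ∀ v, partDeg E v = 2 ∨ partDeg E v = 3 ∨ partDeg E v = 5)
    (hFsub : F ⊆ {e ∈ E | ∀ v : V, v ∈ e → (partDeg E v = 2 ∨ partDeg E v = 5)})
    (hF : ∀ v : V, (partDeg E v = 2 ∨ partDeg E v = 5) → partDeg F v = 2) :
    IsRegularPartOfDeg 3 (E \ F) := by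
  rintro v ⟨e, he, hv⟩
  have hfin : {e ∈ E | v ∈ e}.Finite :=
    Set.finite_of_ncard_ne_zero (show partDeg E v ≠ 0 by have := hdeg v; omega)
  have hsum := partDeg_eq_add_partDeg_sdiff (fun f hf => (hFsub hf).1) hfin
  have hpos : 0 < partDeg (E \ F) v :=
    (partDeg_pos_iff (hfin.subset fun f hf => ⟨hf.1.1, hf.2⟩)).2 ⟨e, he, hv⟩
  by_cases hv25 : partDeg E v = 2 ∨ partDeg E v = 5
  · have := hF v hv25
    omega
  · have hF0 : partDeg F v = 0 :=
      partDeg_eq_zero_of_forall_notMem fun f hf hvf => hv25 ((hFsub hf).2 v hvf)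
    have := hdeg v
    omega

theorem stmt_9_general {V : Type*} (G : SimpleGraph V)
    (hdeg : ∀ v : V, partDeg G.edgeSet v ∈ ({2, 3, 5} : Set ℕ)) :
    (∃ E₁ E₂ : Set (Sym2 V),
        E₁ ∪ E₂ = G.edgeSet ∧ Disjoint E₁ E₂ ∧
        IsRegularPartOfDeg 2 E₁ ∧ IsRegularPartOfDeg 3 E₂) ↔
      (∃ F : Set (Sym2 V),
        F ⊆ {e ∈ G.edgeSet | ∀ v : V, v ∈ e →
              (partDeg G.edgeSet v = 2 ∨ partDeg G.edgeSet v = 5)} ∧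
        ∀ v : V, (partDeg G.edgeSet v = 2 ∨ partDeg G.edgeSet v = 5) →
          partDeg F v = 2) := by
  have hdeg' (v : V) : partDeg G.edgeSet v = 2 ∨ partDeg G.edgeSet v = 3 ∨
      partDeg G.edgeSet v = 5 := by
    simpa only [Set.mem_insert_iff, Set.mem_singleton_iff] using hdeg v
  constructor
  · rintro ⟨E₁, E₂, hunion, hdisj, h₁, h₂⟩
    have hfin (v : V) : {e ∈ E₁ ∪ E₂ | v ∈ e}.Finite := by
      refine Set.finite_of_ncard_ne_zero (show partDeg (E₁ ∪ E₂) v ≠ 0 from ?_)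
      have := hunion ▸ hdeg' v
      omega
    have hiff (v : V) := partDeg_union_eq_two_or_five_iff hdisj h₁ h₂ (hfin v)
    rw [← hunion]
    exact ⟨E₁, fun e he => ⟨Or.inl he, fun v hv => (hiff v).2 (h₁ v ⟨e, he, hv⟩)⟩,
      fun v hv => (hiff v).1 hv⟩
  · rintro ⟨F, hFsub, hF⟩
    exact ⟨F, G.edgeSet \ F, Set.union_sdiff_cancel fun e he => (hFsub he).1,
      Set.disjoint_sdiff_right, fun v ⟨e, he, hv⟩ => hF v ((hFsub he).2 v hv),
      isRegularPartOfDeg_three_sdiff hdeg' hFsub hF⟩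

/-- for a finite graph all of whose vertex degrees lie in {2, 3, 5}, with G' the
induced subgraph on the vertices of degree 2 or 5, the edge set of G decomposes into a
2-regular part and a 3-regular part iff G' has a 2-factor. -/
theorem stmt_9 {V : Type*} [Fintype V] (G : SimpleGraph V)
    (hdeg : ∀ v : V, partDeg G.edgeSet v ∈ ({2, 3, 5} : Set ℕ)) :
    (∃ E₁ E₂ : Set (Sym2 V),
        E₁ ∪ E₂ = G.edgeSet ∧ Disjoint E₁ E₂ ∧
        IsRegularPartOfDeg 2 E₁ ∧ IsRegularPartOfDeg 3 E₂) ↔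
      (∃ F : Set (Sym2 V),
        F ⊆ {e ∈ G.edgeSet | ∀ v : V, v ∈ e →
              (partDeg G.edgeSet v = 2 ∨ partDeg G.edgeSet v = 5)} ∧
        ∀ v : V, (partDeg G.edgeSet v = 2 ∨ partDeg G.edgeSet v = 5) →
          partDeg F v = 2) :=
  stmt_9_general G hdeg
end
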